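/- Let d ≥ 1, let Λ be a finitely generated additive submonoid of (Fin d → ℕ), and let n : Fin d → ℕ satisfy ⟨n,u⟩ > 0 for every u ∈ Λ with u ≠ 0. For each k ∈ ℕ, the map sending a nonzero class φ mod p_{k+1} (for φ ∈ p_k) to the n-initial form in_n φ, and the zero class to 0, is a well-defined ℂ-linear isomorphism from the quotient module p_k / p_{k+1} onto H_k, the ℂ-span in AddMonoidAlgebra ℂ (Fin d → ℕ) of the monomials X^u with u ∈ Λ and ⟨n,u⟩ = k. -/

import Mathlib

/-!
Truncating a series to the exponents `u ∈ Λ` of weight `k` is a linear map `p_k → H_k`; its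
kernel is `p_{k+1}`, since `φ ∈ p_k` has no exponent of weight `< k`, and it hits every monomial
`X^u`, which lies in `p_k`. The truncation lands in finitely supported series because that set of
exponents is finite: writing `u` in terms of the nonzero generators of `Λ`, each of weight `≥ 1`,
every generator occurs at most `k` times.
-/

noncomputable section

/-- Coefficient of a multivariate power series at an exponent `u : Fin d → ℕ`. -/
def coeffFun (d : ℕ) (φ : MvPowerSeries (Fin d) ℂ) (u : Fin d → ℕ) : ℂ :=
  MvPowerSeries.coeff (Finsupp.equivFunOnFinite.symm u) φ

/-- Support of a multivariate power series, as a set of exponents `u : Fin d → ℕ`. -/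
def suppS (d : ℕ) (φ : MvPowerSeries (Fin d) ℂ) : Set (Fin d → ℕ) :=
  {u | coeffFun d φ u ≠ 0}

/-- The weight `⟨n,u⟩ = ∑ i, n i * u i`. -/
def wt {d : ℕ} (n u : Fin d → ℕ) : ℕ := ∑ i, n i * u i

/-- The `n`-weighted order of a power series: the least weight of an exponent
in its support (junk value `0` for `φ = 0`, by `Nat.sInf_empty`). -/
def ordn (d : ℕ) (n : Fin d → ℕ) (φ : MvPowerSeries (Fin d) ℂ) : ℕ :=
  sInf (wt n '' suppS d φ)

lemma suppS_add (d : ℕ) (φ ψ : MvPowerSeries (Fin d) ℂ) :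
    suppS d (φ + ψ) ⊆ suppS d φ ∪ suppS d ψ := by
  intro u hu
  by_contra h
  simp only [Set.mem_union, suppS, Set.mem_setOf_eq, not_or, not_not] at h hu
  apply hu
  show coeffFun d (φ + ψ) u = 0
  have : coeffFun d (φ + ψ) u = coeffFun d φ u + coeffFun d ψ u := by
    simp [coeffFun, map_add]
  rw [this, h.1, h.2, add_zero]

/-- `ℂ[[Λ]]`: the subalgebra of `MvPowerSeries (Fin d) ℂ` of series with support
contained in the additive submonoid `Λ`; it is the analytic algebra of the germ
of the affine toric variety `Z^Λ = Spec ℂ[Λ]` at its zero-dimensional orbit. -/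
def RL (d : ℕ) (Λ : AddSubmonoid (Fin d → ℕ)) : Subalgebra ℂ (MvPowerSeries (Fin d) ℂ) where
  carrier := {φ | suppS d φ ⊆ (Λ : Set (Fin d → ℕ))}
  zero_mem' := by
    intro u hu
    exact absurd (by simp [coeffFun]) hu
  one_mem' := by
    intro u hu
    have h : coeffFun d 1 u ≠ 0 := hu
    rw [coeffFun, MvPowerSeries.coeff_one] at h
    have : Finsupp.equivFunOnFinite.symm u = 0 := by
      by_contra hne; exact h (if_neg hne)
    have hu0 : u = 0 := by
      have := congrArg Finsupp.equivFunOnFinite this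
      rw [Equiv.apply_symm_apply] at this
      exact this.trans rfl
    rw [hu0]; exact Λ.zero_mem
  add_mem' := by
    intro φ ψ hφ hψ u hu
    rcases suppS_add d φ ψ hu with h | h
    · exact hφ h
    · exact hψ h
  mul_mem' := by
    intro φ ψ hφ hψ u hu
    have h : coeffFun d (φ * ψ) u ≠ 0 := hu
    rw [coeffFun, MvPowerSeries.coeff_mul] at h
    obtain ⟨p, hp, hne⟩ := Finset.exists_ne_zero_of_sum_ne_zero h
    replace hp := Finset.HasAntidiagonal.mem_antidiagonal.mp hp
    have h1 : Finsupp.equivFunOnFinite p.1 ∈ Λ := by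
      apply hφ
      show coeffFun d φ _ ≠ 0
      rw [coeffFun, Equiv.symm_apply_apply]
      exact left_ne_zero_of_mul hne
    have h2 : Finsupp.equivFunOnFinite p.2 ∈ Λ := by
      apply hψ
      show coeffFun d ψ _ ≠ 0
      rw [coeffFun, Equiv.symm_apply_apply]
      exact right_ne_zero_of_mul hne
    have hsum : Finsupp.equivFunOnFinite p.1 + Finsupp.equivFunOnFinite p.2 = u := by
      have := congrArg Finsupp.equivFunOnFinite hp
      rw [Equiv.apply_symm_apply] at this
      exact this
    rw [← hsum]
    exact Λ.add_mem h1 h2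
  algebraMap_mem' := by
    intro c u hu
    have h : coeffFun d (algebraMap ℂ (MvPowerSeries (Fin d) ℂ) c) u ≠ 0 := hu
    rw [coeffFun] at h
    rw [show (algebraMap ℂ (MvPowerSeries (Fin d) ℂ) c) = MvPowerSeries.C (σ := Fin d) (R := ℂ) c from rfl,
      MvPowerSeries.coeff_C] at h
    have : Finsupp.equivFunOnFinite.symm u = 0 := by
      by_contra hne; exact h (if_neg hne)
    have hu0 : u = 0 := by
      have := congrArg Finsupp.equivFunOnFinite this
      rw [Equiv.apply_symm_apply] at this
      exact this.trans rfl
    rw [hu0]; exact Λ.zero_mem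

lemma suppS_nonempty (d : ℕ) (φ : MvPowerSeries (Fin d) ℂ) (hφ : φ ≠ 0) :
    (suppS d φ).Nonempty := by
  have : ∃ v : Fin d →₀ ℕ, MvPowerSeries.coeff v φ ≠ 0 := by
    by_contra h
    push_neg at h
    exact hφ (MvPowerSeries.ext h)
  obtain ⟨v, hv⟩ := this
  refine ⟨Finsupp.equivFunOnFinite v, ?_⟩
  show coeffFun d φ _ ≠ 0
  rw [coeffFun, Equiv.symm_apply_apply]
  exact hv

lemma ordn_le (d : ℕ) (n : Fin d → ℕ) (φ : MvPowerSeries (Fin d) ℂ) (u : Fin d → ℕ)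
    (hu : u ∈ suppS d φ) : ordn d n φ ≤ wt n u :=
  Nat.sInf_le ⟨u, hu, rfl⟩

lemma le_ordn (d : ℕ) (n : Fin d → ℕ) (φ : MvPowerSeries (Fin d) ℂ) (k : ℕ) (hφ : φ ≠ 0)
    (h : ∀ u ∈ suppS d φ, k ≤ wt n u) : k ≤ ordn d n φ := by
  apply le_csInf
  · exact (suppS_nonempty d φ hφ).image _
  · rintro b ⟨u, hu, rfl⟩
    exact h u hu

lemma suppS_smul (d : ℕ) (c : ℂ) (φ : MvPowerSeries (Fin d) ℂ) :
    suppS d (c • φ) ⊆ suppS d φ := by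
  intro u hu
  have h : coeffFun d (c • φ) u ≠ 0 := hu
  have : coeffFun d (c • φ) u = c * coeffFun d φ u := by
    simp [coeffFun]
  rw [this] at h
  exact right_ne_zero_of_mul h

/-- The `k`-th step `p_k = {φ ∈ R | φ = 0 ∨ ord_n φ ≥ k}` of the filtration of a
subalgebra `R` of the power series ring induced by the `n`-weighted order,
as a `ℂ`-submodule of the power series ring. -/
def pP (d : ℕ) (R : Subalgebra ℂ (MvPowerSeries (Fin d) ℂ)) (n : Fin d → ℕ) (k : ℕ) :
    Submodule ℂ (MvPowerSeries (Fin d) ℂ) where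
  carrier := {φ | φ ∈ R ∧ (φ = 0 ∨ k ≤ ordn d n φ)}
  zero_mem' := ⟨R.zero_mem, Or.inl rfl⟩
  add_mem' := by
    rintro φ ψ ⟨hφR, hφ⟩ ⟨hψR, hψ⟩
    refine ⟨R.add_mem hφR hψR, ?_⟩
    by_cases h0 : φ + ψ = 0
    · exact Or.inl h0
    · refine Or.inr (le_ordn d n _ k h0 ?_)
      intro u hu
      rcases suppS_add d φ ψ hu with h | h
      · rcases hφ with h1 | h1
        · exact absurd h (by simp [h1, suppS, coeffFun])
        · exact le_trans h1 (ordn_le d n φ u h)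
      · rcases hψ with h1 | h1
        · exact absurd h (by simp [h1, suppS, coeffFun])
        · exact le_trans h1 (ordn_le d n ψ u h)
  smul_mem' := by
    rintro c φ ⟨hφR, hφ⟩
    refine ⟨R.smul_mem hφR c, ?_⟩
    by_cases h0 : c • φ = 0
    · exact Or.inl h0
    · refine Or.inr ?_
      rcases hφ with h1 | h1
      · exact absurd (by rw [h1, smul_zero]) h0
      · refine le_ordn d n _ k h0 ?_
        intro u hu
        exact le_trans h1 (ordn_le d n φ u (suppS_smul d c φ hu))

/-- The quotient module `p_k / p_{k+1}`. -/
abbrev grPiece (d : ℕ) (R : Subalgebra ℂ (MvPowerSeries (Fin d) ℂ)) (n : Fin d → ℕ)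
    (k : ℕ) :=
  ↥(pP d R n k) ⧸ (pP d R n (k + 1)).comap (pP d R n k).subtype

/-- `H_k`: the `ℂ`-span in `AddMonoidAlgebra ℂ (Fin d → ℕ)` of the monomials `X^u`
with `u ∈ Λ` and `⟨n,u⟩ = k`. -/
def HkAmb (d : ℕ) (Λ : AddSubmonoid (Fin d → ℕ)) (n : Fin d → ℕ) (k : ℕ) :
    Submodule ℂ (AddMonoidAlgebra ℂ (Fin d → ℕ)) :=
  Submodule.span ℂ {x | ∃ u ∈ Λ, wt n u = k ∧ x = AddMonoidAlgebra.single u 1}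

namespace AddSubmonoid

variable {M : Type*} [AddCommMonoid M]

theorem finite_setOf_mem_closure_and_eq_of_pos {S : Set M} (hS : S.Finite) (w : M →+ ℕ)
    (hw : ∀ s ∈ S, 0 < w s) (k : ℕ) : {x | x ∈ closure S ∧ w x = k}.Finite := by
  classical
  have := hS.fintype
  refine ((Set.finite_Iic fun _ : S => k).image fun a => ∑ i : S, a i • (i : M)).subset ?_
  rintro x ⟨hx, rfl⟩
  obtain ⟨a, rfl⟩ := mem_closure_iff_of_fintype.mp hx
  refine ⟨a, fun i => ?_, rfl⟩
  calc a i ≤ a i * w i := Nat.le_mul_of_pos_right _ (hw i i.2)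
    _ ≤ ∑ j, a j * w j :=
      Finset.single_le_sum (f := fun j => a j * w j) (fun j _ => Nat.zero_le _) (Finset.mem_univ i)
    _ = w (∑ j, a j • (j : M)) := by simp [map_sum, map_nsmul]

theorem FG.finite_setOf_mem_and_eq {Λ : AddSubmonoid M} (hΛ : Λ.FG) (w : M →+ ℕ)
    (hw : ∀ x ∈ Λ, x ≠ 0 → 0 < w x) (k : ℕ) : {x | x ∈ Λ ∧ w x = k}.Finite := by
  obtain ⟨S, rfl⟩ := hΛ
  have hclosure : closure ((S : Set M) \ {0}) = closure S := by
    rw [← closure_insert_zero, Set.insert_sdiff_singleton, closure_insert_zero]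
  rw [← hclosure]
  exact finite_setOf_mem_closure_and_eq_of_pos S.finite_toSet.sdiff w
    (fun s hs => hw s (subset_closure hs.1) hs.2) k

end AddSubmonoid

def wtHom {d : ℕ} (n : Fin d → ℕ) : (Fin d → ℕ) →+ ℕ where
  toFun := wt n
  map_zero' := by simp [wt]
  map_add' u v := by simp [wt, mul_add, Finset.sum_add_distrib]

theorem coeffFun_monomial_one (d : ℕ) (u v : Fin d → ℕ) :
    coeffFun d (MvPowerSeries.monomial (Finsupp.equivFunOnFinite.symm u) 1) v =
      if v = u then 1 else 0 := by
  simp [coeffFun, MvPowerSeries.coeff_monomial]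

section Filtration

variable {d : ℕ} {R : Subalgebra ℂ (MvPowerSeries (Fin d) ℂ)} {n : Fin d → ℕ} {k : ℕ}
  {φ : MvPowerSeries (Fin d) ℂ}

theorem mem_pP_iff : φ ∈ pP d R n k ↔ φ ∈ R ∧ ∀ u ∈ suppS d φ, k ≤ wt n u := by
  refine and_congr_right fun _ => ⟨?_, fun h => ?_⟩
  · rintro (rfl | hk) u hu
    · simp [suppS, coeffFun] at hu
    · exact hk.trans (ordn_le d n φ u hu)
  · by_cases hφ : φ = 0
    · exact Or.inl hφ
    · exact Or.inr (le_ordn d n φ k hφ h)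

theorem mem_pP_succ_iff (hφ : φ ∈ pP d R n k) :
    φ ∈ pP d R n (k + 1) ↔ ∀ u, wt n u = k → coeffFun d φ u = 0 := by
  rw [mem_pP_iff] at hφ ⊢
  refine ⟨fun h u hu => ?_, fun h => ⟨hφ.1, fun u hu => ?_⟩⟩
  · by_contra hne
    exact absurd (h.2 u hne) (by omega)
  · exact lt_of_le_of_ne (hφ.2 u hu) fun he => hu (h u he.symm)

end Filtration

def truncOn (d : ℕ) (T : Finset (Fin d → ℕ)) :
    MvPowerSeries (Fin d) ℂ →ₗ[ℂ] AddMonoidAlgebra ℂ (Fin d → ℕ) where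
  toFun φ := ∑ u ∈ T, AddMonoidAlgebra.single u (coeffFun d φ u)
  map_add' φ ψ := by
    simp [coeffFun, ← Finset.sum_add_distrib, AddMonoidAlgebra.single_add]
  map_smul' c φ := by
    simp [coeffFun, Finset.smul_sum, AddMonoidAlgebra.smul_single]

theorem coeff_truncOn (d : ℕ) (T : Finset (Fin d → ℕ)) (φ : MvPowerSeries (Fin d) ℂ)
    (v : Fin d → ℕ) : (truncOn d T φ).coeff v = if v ∈ T then coeffFun d φ v else 0 := by
  simp [truncOn, Finsupp.single_apply]

section InitialForm

variable {d : ℕ} {Λ : AddSubmonoid (Fin d → ℕ)} {n : Fin d → ℕ} {k : ℕ}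
  {T : Finset (Fin d → ℕ)} (hT : ∀ v, v ∈ T ↔ v ∈ Λ ∧ wt n v = k)
include hT

theorem coeff_truncOn_of_mem_RL {φ : MvPowerSeries (Fin d) ℂ} (hφ : φ ∈ RL d Λ)
    (v : Fin d → ℕ) :
    (truncOn d T φ).coeff v = if wt n v = k then coeffFun d φ v else 0 := by
  rw [coeff_truncOn]
  by_cases hΛv : v ∈ Λ
  · simp [hT, hΛv]
  · have : coeffFun d φ v = 0 := not_not.mp fun hv => hΛv (hφ hv)
    simp [hT, hΛv, this]

theorem ker_truncOn_comp_subtype :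
    LinearMap.ker ((truncOn d T).comp (pP d (RL d Λ) n k).subtype) =
      (pP d (RL d Λ) n (k + 1)).comap (pP d (RL d Λ) n k).subtype := by
  ext ⟨φ, hφ⟩
  simp only [LinearMap.mem_ker, LinearMap.comp_apply, Submodule.coe_subtype,
    Submodule.mem_comap, mem_pP_succ_iff hφ, ← AddMonoidAlgebra.coeff_inj,
    AddMonoidAlgebra.coeff_zero, Finsupp.ext_iff, Finsupp.coe_zero, Pi.zero_apply,
    coeff_truncOn_of_mem_RL hT hφ.1]
  exact forall_congr' fun u => by by_cases hu : wt n u = k <;> simp [hu]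

theorem range_truncOn_comp_subtype :
    LinearMap.range ((truncOn d T).comp (pP d (RL d Λ) n k).subtype) = HkAmb d Λ n k := by
  refine le_antisymm ?_ (Submodule.span_le.mpr ?_)
  · rintro _ ⟨⟨φ, -⟩, rfl⟩
    refine Submodule.sum_mem _ fun u hu => ?_
    simp only [Submodule.coe_subtype]
    rw [← mul_one (coeffFun d φ u), ← smul_eq_mul, ← AddMonoidAlgebra.smul_single]
    obtain ⟨huΛ, hu⟩ := (hT u).1 hu
    exact Submodule.smul_mem _ _ (Submodule.subset_span ⟨u, huΛ, hu, rfl⟩)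
  · rintro _ ⟨u, huΛ, hu, rfl⟩
    set X := MvPowerSeries.monomial (Finsupp.equivFunOnFinite.symm u) (1 : ℂ)
    have hsupp : suppS d X ⊆ {u} := fun v hv => by
      by_contra h
      exact hv (by simpa [X, coeffFun_monomial_one] using h)
    have hX : X ∈ pP d (RL d Λ) n k := mem_pP_iff.mpr
      ⟨fun v hv => (hsupp hv).symm ▸ huΛ, fun v hv => (hsupp hv).symm ▸ hu.ge⟩
    refine ⟨⟨X, hX⟩, AddMonoidAlgebra.coeff_inj.mp (Finsupp.ext fun v => ?_)⟩
    simp only [LinearMap.comp_apply, Submodule.coe_subtype,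
      coeff_truncOn_of_mem_RL hT hX.1, X, coeffFun_monomial_one,
      AddMonoidAlgebra.coeff_single, Finsupp.single_apply]
    by_cases hv : v = u <;> simp [hv, hu, Ne.symm]

end InitialForm

theorem grPiece_equiv_Hk_general (d : ℕ) (Λ : AddSubmonoid (Fin d → ℕ))
    (hΛ : Λ.FG) (n : Fin d → ℕ)
    (hn : ∀ u ∈ Λ, u ≠ (0 : Fin d → ℕ) → 0 < wt n u) (k : ℕ) :
    ∃ e : grPiece d (RL d Λ) n k ≃ₗ[ℂ] ↥(HkAmb d Λ n k),
      ∀ (φ : MvPowerSeries (Fin d) ℂ) (hφ : φ ∈ pP d (RL d Λ) n k),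
        (fun u : Fin d → ℕ =>
          ((e (Submodule.Quotient.mk ⟨φ, hφ⟩) : ↥(HkAmb d Λ n k)) :
            AddMonoidAlgebra ℂ (Fin d → ℕ)).coeff u) =
          fun u : Fin d → ℕ => if wt n u = k then coeffFun d φ u else 0 := by
  have hfin := hΛ.finite_setOf_mem_and_eq (wtHom n) hn k
  have hT : ∀ v, v ∈ hfin.toFinset ↔ v ∈ Λ ∧ wt n v = k := fun v => hfin.mem_toFinset
  let G := (truncOn d hfin.toFinset).comp (pP d (RL d Λ) n k).subtype
  refine ⟨(Submodule.quotEquivOfEq _ _ (ker_truncOn_comp_subtype hT).symm).trans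
    (G.quotKerEquivRange.trans (LinearEquiv.ofEq _ _ (range_truncOn_comp_subtype hT))),
    fun φ hφ => funext (coeff_truncOn_of_mem_RL hT hφ.1)⟩

/-- for `Λ` finitely generated and `n` of positive weight on `Λ \ {0}`,
the map sending a nonzero class `φ mod p_{k+1}` (for `φ ∈ p_k`) to the `n`-initial form
`in_n φ`, and the zero class to `0`, is a well-defined `ℂ`-linear isomorphism from
`p_k / p_{k+1}` onto `H_k` (the span of the monomials `X^u`, `u ∈ Λ`, `⟨n,u⟩ = k`). -/
theorem grPiece_equiv_Hk (d : ℕ) (hd : 1 ≤ d) (Λ : AddSubmonoid (Fin d → ℕ))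
    (hΛ : Λ.FG) (n : Fin d → ℕ)
    (hn : ∀ u ∈ Λ, u ≠ (0 : Fin d → ℕ) → 0 < wt n u) (k : ℕ) :
    ∃ e : grPiece d (RL d Λ) n k ≃ₗ[ℂ] ↥(HkAmb d Λ n k),
      ∀ (φ : MvPowerSeries (Fin d) ℂ) (hφ : φ ∈ pP d (RL d Λ) n k),
        (fun u : Fin d → ℕ =>
          ((e (Submodule.Quotient.mk ⟨φ, hφ⟩) : ↥(HkAmb d Λ n k)) :
            AddMonoidAlgebra ℂ (Fin d → ℕ)).coeff u) =
          fun u : Fin d → ℕ => if wt n u = k then coeffFun d φ u else 0 :=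
  grPiece_equiv_Hk_general d Λ hΛ n hn k
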